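/- arXiv:1908.11802 — 7 statements merged into one kernel-verified Lean document; each statement's English description precedes it below -/
import Mathlib

section
/- In a tree T, for every vertex v there exists a peripheral vertex u (a vertex with ecc(u) = diam(T)) such that ecc(v) = d(v,u). Equivalently, ecc(v) = max over peripheral vertices u of d(v,u). -/
open Finset

variable {V : Type*}

/-- Eccentricity: the maximum distance from `v` to any vertex. -/
noncomputable def ecc (G : SimpleGraph V) [Fintype V] (v : V) : ℕ :=
  Finset.univ.sup fun u => G.dist v u

/-- Diameter: the maximum eccentricity. -/
noncomputable def gdiam (G : SimpleGraph V) [Fintype V] : ℕ :=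
  Finset.univ.sup fun v => ecc G v

/-- A vertex is peripheral if its eccentricity equals the diameter. -/
noncomputable def peripheral (G : SimpleGraph V) [Fintype V] (v : V) : Prop :=
  ecc G v = gdiam G

/-- Normality: the minimum distance from `v` to a peripheral vertex. -/
noncomputable def gnorm (G : SimpleGraph V) [Fintype V] (v : V) : ℕ :=
  sInf {n | ∃ u, peripheral G u ∧ G.dist v u = n}

/-- The sum of normalities. -/
noncomputable def NormSum (G : SimpleGraph V) [Fintype V] : ℕ :=
  ∑ v, gnorm G v

/-- λ(v) = ecc(v) − norm(v). -/
noncomputable def lam (G : SimpleGraph V) [Fintype V] (v : V) : ℕ :=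
  ecc G v - gnorm G v

/-- Λ(T) = Σ_v λ(v). -/
noncomputable def LamSum (G : SimpleGraph V) [Fintype V] : ℕ :=
  ∑ v, lam G v

/-!
Let `u` be a vertex farthest from `v`, and let `p`, `q` be any two vertices, with feet `m₁`, `m₂`
on the path from `v` to `u`. As `d(v,p) ≤ d(v,u)`, the branch at `m₁` towards `p` is no longer
than the rest of the path from `m₁` to `u`: `d(p,m₁) ≤ d(m₁,u)`, and likewise for `q`. If `m₁` lies
between `v` and `m₂`, then `d(p,q) ≤ d(p,m₁) + d(m₁,m₂) + d(m₂,q) ≤ d(p,m₁) + d(m₁,u) = d(p,u)`;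
otherwise `d(p,q) ≤ d(q,u)` symmetrically. So `ecc u` bounds every distance, and `u` is
peripheral.
-/

namespace SimpleGraph

open Walk

variable {G : SimpleGraph V}

lemma Walk.dist_add_dist_of_length_eq_dist [DecidableEq V] {a b m : V} {p : G.Walk a b}
    (hp : p.length = G.dist a b) (hm : m ∈ p.support) :
    G.dist a m + G.dist m b = G.dist a b := by
  have htake := dist_le (p.takeUntil m hm)
  have hdrop := dist_le (p.dropUntil m hm)
  have hsplit : (p.takeUntil m hm).length + (p.dropUntil m hm).length = p.length := by
    rw [← length_append, take_spec]
  have htri := (p.takeUntil m hm).reachable.dist_triangle_left b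
  omega

lemma IsTree.dist_eq_length (hT : G.IsTree) {a b : V} {p : G.Walk a b} (hp : p.IsPath) :
    G.dist a b = p.length := by
  obtain ⟨q, hq, hlen⟩ := hT.connected.exists_path_of_dist a b
  rw [← hlen, (hT.existsUnique_path a b).unique hq hp]

lemma IsTree.dist_add_dist_of_mem_support [DecidableEq V] (hT : G.IsTree) {a b m : V}
    {p : G.Walk a b} (hp : p.IsPath) (hm : m ∈ p.support) :
    G.dist a m + G.dist m b = G.dist a b :=
  dist_add_dist_of_length_eq_dist (hT.dist_eq_length hp).symm hm

lemma Walk.IsPath.append_of_support_inter {x m y : V} {p : G.Walk x m} {q : G.Walk m y}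
    (hp : p.IsPath) (hq : q.IsPath) (hpq : ∀ w ∈ p.support, w ∈ q.support → w = m) :
    (p.append q).IsPath := by
  rw [isPath_def, support_append, List.nodup_append]
  refine ⟨hp.support_nodup, hq.support_nodup.sublist q.support.tail_sublist, ?_⟩
  rintro w hwp w' hw' rfl
  have hwq : w ∈ q.support := List.mem_of_mem_tail hw'
  have hnd := q.cons_tail_support ▸ hq.support_nodup
  exact (List.nodup_cons.mp hnd).1 (hpq w hwp hwq ▸ hw')

/-- The witness is the vertex of `W` closest to `x`: a geodesic from `x` to it meets `W` only
there, so it extends along `W` to a path towards either end. -/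
lemma IsTree.exists_median (hT : G.IsTree) (x : V) {v z : V} {W : G.Walk v z}
    (hW : W.IsPath) : ∃ m ∈ W.support,
      G.dist x m + G.dist m v = G.dist x v ∧ G.dist x m + G.dist m z = G.dist x z := by
  classical
  obtain ⟨m, hmW, hmin⟩ :=
    W.support.toFinset.exists_min_image (G.dist x) ⟨v, by simp⟩
  rw [List.mem_toFinset] at hmW
  obtain ⟨P, hP, hPlen⟩ := hT.connected.exists_path_of_dist x m
  have hmeet : ∀ w ∈ P.support, w ∈ W.support → w = m := fun w hwP hwW => by
    have hsplit := dist_add_dist_of_length_eq_dist hPlen hwP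
    have hle := hmin w (List.mem_toFinset.mpr hwW)
    exact (hT.connected.dist_eq_zero_iff.mp (by omega : G.dist w m = 0))
  have hjoin : ∀ {y : V} {Q : G.Walk m y}, Q.IsPath → Q.support ⊆ W.support →
      G.dist x m + G.dist m y = G.dist x y := fun hQ hQW => by
    rw [hT.dist_eq_length (hP.append_of_support_inter hQ fun w hwP hwQ => hmeet w hwP (hQW hwQ)),
      length_append, ← hPlen, ← hT.dist_eq_length hQ]
  refine ⟨m, hmW, hjoin (hW.takeUntil hmW).reverse ?_, hjoin (hW.dropUntil hmW)
    (W.support_dropUntil_subset_support hmW)⟩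
  rw [support_reverse]
  exact fun w hw => W.support_takeUntil_subset_support hmW (List.mem_reverse.mp hw)

lemma IsTree.dist_add_dist_or_dist_add_dist (hT : G.IsTree) {a b m n : V} {W : G.Walk a b}
    (hW : W.IsPath) (hm : m ∈ W.support) (hn : n ∈ W.support) :
    G.dist a n + G.dist n m = G.dist a m ∨ G.dist m n + G.dist n b = G.dist m b := by
  classical
  rw [← W.take_spec hm, mem_support_append_iff] at hn
  exact hn.imp (hT.dist_add_dist_of_mem_support (hW.takeUntil hm))
    (hT.dist_add_dist_of_mem_support (hW.dropUntil hm))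

lemma IsTree.dist_le_max_of_dist_le (hT : G.IsTree) {v u p q : V}
    (hp : G.dist v p ≤ G.dist v u) (hq : G.dist v q ≤ G.dist v u) :
    G.dist p q ≤ max (G.dist u p) (G.dist u q) := by
  classical
  obtain ⟨W, hW, -⟩ := hT.existsUnique_path v u
  obtain ⟨m₁, hm₁, hpv, hpu⟩ := hT.exists_median p hW
  obtain ⟨m₂, hm₂, hqv, hqu⟩ := hT.exists_median q hW
  have hvm₁ := hT.dist_add_dist_of_mem_support hW hm₁
  have hvm₂ := hT.dist_add_dist_of_mem_support hW hm₂
  have hpq : G.dist p q ≤ G.dist p m₁ + G.dist m₁ m₂ + G.dist m₂ q :=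
    calc G.dist p q ≤ G.dist p m₁ + G.dist m₁ q := hT.connected.dist_triangle
      _ ≤ G.dist p m₁ + (G.dist m₁ m₂ + G.dist m₂ q) := by
        grw [hT.connected.dist_triangle (u := m₁) (v := m₂) (w := q)]
      _ = _ := (add_assoc _ _ _).symm
  have hpm : G.dist p m₁ ≤ G.dist m₁ u := by
    rw [dist_comm (u := v), ← hpv, dist_comm (u := m₁)] at hp
    omega
  have hqm : G.dist q m₂ ≤ G.dist m₂ u := by
    rw [dist_comm (u := v), ← hqv, dist_comm (u := m₂)] at hq
    omega
  rw [dist_comm (u := u), dist_comm (u := u), ← hpu, ← hqu]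
  have := G.dist_comm (u := m₁) (v := m₂)
  have := G.dist_comm (u := m₂) (v := q)
  rcases hT.dist_add_dist_or_dist_add_dist hW hm₂ hm₁ with h | h <;> omega

end SimpleGraph

section Eccentricity

variable [Fintype V] {G : SimpleGraph V}

lemma dist_le_ecc (v u : V) : G.dist v u ≤ ecc G v :=
  le_sup (mem_univ u)

lemma exists_dist_eq_ecc (v : V) : ∃ u, ecc G v = G.dist v u := by
  obtain ⟨u, -, hu⟩ := exists_mem_eq_sup univ ⟨v, mem_univ v⟩ (G.dist v)
  exact ⟨u, hu⟩

lemma gdiam_le_iff {n : ℕ} : gdiam G ≤ n ↔ ∀ p q, G.dist p q ≤ n := by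
  simp only [gdiam, ecc, Finset.sup_le_iff, mem_univ, true_implies]

lemma peripheral_of_forall_dist_le_ecc {u : V} (h : ∀ p q, G.dist p q ≤ ecc G u) :
    peripheral G u :=
  le_antisymm (le_sup (f := ecc G) (mem_univ u)) (gdiam_le_iff.mpr h)

end Eccentricity

theorem stmt_1 [Fintype V] (G : SimpleGraph V) (hT : G.IsTree) (v : V) :
    ∃ u : V, peripheral G u ∧ ecc G v = G.dist v u := by
  obtain ⟨u, hu⟩ := exists_dist_eq_ecc (G := G) v
  have hfar : ∀ w, G.dist v w ≤ G.dist v u := fun w => hu ▸ dist_le_ecc v w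
  refine ⟨u, peripheral_of_forall_dist_le_ecc fun p q => ?_, hu⟩
  exact (hT.dist_le_max_of_dist_le (hfar p) (hfar q)).trans
    (max_le (dist_le_ecc u p) (dist_le_ecc u q))
end

section
/- Adding an edge to a graph can strictly increase the sum of normalities: there exists a connected graph G and an edge e ∉ E(G) such that Norm(G + e) > Norm(G). Concretely, for the tree T on vertices v1,...,v5 with edges v1v2, v2v3, v3v4, v3v5, one has Norm(T) = 2 while Norm(T + v1v5) = 3. -/
open Finset

variable {V : Type*}

/-- The tree on v₁,…,v₅ with edges v₁v₂, v₂v₃, v₃v₄, v₃v₅. -/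
def T6 : SimpleGraph (Fin 5) :=
  SimpleGraph.fromEdgeSet {s(0, 1), s(1, 2), s(2, 3), s(2, 4)}

section helpers

lemma dist_eq_two' {G : SimpleGraph V} {u v : V} (hne : u ≠ v) (hna : ¬ G.Adj u v)
    (w : V) (h1 : G.Adj u w) (h2 : G.Adj w v) : G.dist u v = 2 := by
  have hr : G.Reachable u v := ⟨h1.toWalk.append h2.toWalk⟩
  have hle : G.dist u v ≤ 2 := by simpa using SimpleGraph.dist_le (h1.toWalk.append h2.toWalk)
  have h0 : G.dist u v ≠ 0 := by
    intro h
    rcases SimpleGraph.dist_eq_zero_iff_eq_or_not_reachable.mp h with e | nr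
    · exact hne e
    · exact nr hr
  have h1' : G.dist u v ≠ 1 := fun h => hna (SimpleGraph.dist_eq_one_iff_adj.mp h)
  omega

lemma two_walk {G : SimpleGraph V} {u v : V} (p : G.Walk u v) (hp : p.length = 2) :
    ∃ w, G.Adj u w ∧ G.Adj w v := by
  cases p with
  | nil => simp at hp
  | cons h q =>
    cases q with
    | nil => simp at hp
    | cons h' q' =>
      cases q' with
      | nil => exact ⟨_, h, h'⟩
      | cons h'' q'' => simp [SimpleGraph.Walk.length_cons] at hp

lemma dist_eq_three' {G : SimpleGraph V} {u v : V} (hne : u ≠ v) (hna : ¬ G.Adj u v)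
    (hno2 : ∀ w, ¬ (G.Adj u w ∧ G.Adj w v))
    (a b : V) (h1 : G.Adj u a) (h2 : G.Adj a b) (h3 : G.Adj b v) : G.dist u v = 3 := by
  have hr : G.Reachable u v := ⟨(h1.toWalk.append h2.toWalk).append h3.toWalk⟩
  have hle : G.dist u v ≤ 3 := by
    simpa using SimpleGraph.dist_le ((h1.toWalk.append h2.toWalk).append h3.toWalk)
  have h0 : G.dist u v ≠ 0 := by
    intro h
    rcases SimpleGraph.dist_eq_zero_iff_eq_or_not_reachable.mp h with e | nr
    · exact hne e
    · exact nr hr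
  have h1' : G.dist u v ≠ 1 := fun h => hna (SimpleGraph.dist_eq_one_iff_adj.mp h)
  have h2' : G.dist u v ≠ 2 := by
    intro h
    obtain ⟨p, hp⟩ := hr.exists_walk_length_eq_dist
    rw [h] at hp
    obtain ⟨w, hw⟩ := two_walk p hp
    exact hno2 w hw
  omega

end helpers

-- the augmented graph
noncomputable abbrev G2 : SimpleGraph (Fin 5) := T6 ⊔ SimpleGraph.fromEdgeSet {s((0 : Fin 5), 4)}

lemma T6_adj (a b : Fin 5) : T6.Adj a b ↔
    (a = 0 ∧ b = 1) ∨ (a = 1 ∧ b = 0) ∨ (a = 1 ∧ b = 2) ∨ (a = 2 ∧ b = 1) ∨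
    (a = 2 ∧ b = 3) ∨ (a = 3 ∧ b = 2) ∨ (a = 2 ∧ b = 4) ∨ (a = 4 ∧ b = 2) := by
  simp only [T6, SimpleGraph.fromEdgeSet_adj, Set.mem_insert_iff, Set.mem_singleton_iff,
    Sym2.eq_iff, ne_eq]
  revert a b; decide

lemma G2_adj (a b : Fin 5) : G2.Adj a b ↔
    (a = 0 ∧ b = 1) ∨ (a = 1 ∧ b = 0) ∨ (a = 1 ∧ b = 2) ∨ (a = 2 ∧ b = 1) ∨
    (a = 2 ∧ b = 3) ∨ (a = 3 ∧ b = 2) ∨ (a = 2 ∧ b = 4) ∨ (a = 4 ∧ b = 2) ∨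
    (a = 0 ∧ b = 4) ∨ (a = 4 ∧ b = 0) := by
  simp only [G2, SimpleGraph.sup_adj, T6_adj, SimpleGraph.fromEdgeSet_adj,
    Set.mem_singleton_iff, Sym2.eq_iff, ne_eq]
  revert a b; decide

section T6facts

-- adjacency
lemma a01 : T6.Adj 0 1 := by rw [T6_adj]; decide
lemma a12 : T6.Adj 1 2 := by rw [T6_adj]; decide
lemma a23 : T6.Adj 2 3 := by rw [T6_adj]; decide
lemma a24 : T6.Adj 2 4 := by rw [T6_adj]; decide

lemma T6_conn : T6.Connected := by
  have r : ∀ v : Fin 5, T6.Reachable v 2 := by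
    intro v
    fin_cases v
    · exact ⟨a01.toWalk.append a12.toWalk⟩
    · exact a12.reachable
    · exact SimpleGraph.Reachable.refl 2
    · exact a23.symm.reachable
    · exact a24.symm.reachable
  exact ⟨fun u v => (r u).trans (r v).symm⟩

-- distances (row v: dist v ·)
lemma d01 : T6.dist 0 1 = 1 := SimpleGraph.dist_eq_one_iff_adj.mpr a01
lemma d02 : T6.dist 0 2 = 2 := dist_eq_two' (by decide) (by rw [T6_adj]; decide) 1 a01 a12
lemma d03 : T6.dist 0 3 = 3 :=
  dist_eq_three' (by decide) (by rw [T6_adj]; decide)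
    (by intro w; rw [T6_adj, T6_adj]; revert w; decide) 1 2 a01 a12 a23
lemma d04 : T6.dist 0 4 = 3 :=
  dist_eq_three' (by decide) (by rw [T6_adj]; decide)
    (by intro w; rw [T6_adj, T6_adj]; revert w; decide) 1 2 a01 a12 a24
lemma d12 : T6.dist 1 2 = 1 := SimpleGraph.dist_eq_one_iff_adj.mpr a12
lemma d13 : T6.dist 1 3 = 2 := dist_eq_two' (by decide) (by rw [T6_adj]; decide) 2 a12 a23
lemma d14 : T6.dist 1 4 = 2 := dist_eq_two' (by decide) (by rw [T6_adj]; decide) 2 a12 a24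
lemma d23 : T6.dist 2 3 = 1 := SimpleGraph.dist_eq_one_iff_adj.mpr a23
lemma d24 : T6.dist 2 4 = 1 := SimpleGraph.dist_eq_one_iff_adj.mpr a24
lemma d34 : T6.dist 3 4 = 2 := dist_eq_two' (by decide) (by rw [T6_adj]; decide) 2 a23.symm a24
lemma d10 : T6.dist 1 0 = 1 := by rw [SimpleGraph.dist_comm]; exact d01
lemma d20 : T6.dist 2 0 = 2 := by rw [SimpleGraph.dist_comm]; exact d02
lemma d30 : T6.dist 3 0 = 3 := by rw [SimpleGraph.dist_comm]; exact d03
lemma d40 : T6.dist 4 0 = 3 := by rw [SimpleGraph.dist_comm]; exact d04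
lemma d21 : T6.dist 2 1 = 1 := by rw [SimpleGraph.dist_comm]; exact d12
lemma d31 : T6.dist 3 1 = 2 := by rw [SimpleGraph.dist_comm]; exact d13
lemma d41 : T6.dist 4 1 = 2 := by rw [SimpleGraph.dist_comm]; exact d14
lemma d32 : T6.dist 3 2 = 1 := by rw [SimpleGraph.dist_comm]; exact d23
lemma d42 : T6.dist 4 2 = 1 := by rw [SimpleGraph.dist_comm]; exact d24
lemma d43 : T6.dist 4 3 = 2 := by rw [SimpleGraph.dist_comm]; exact d34
lemma dself (v : Fin 5) : T6.dist v v = 0 := SimpleGraph.dist_self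

-- eccentricities
lemma ecc0 : ecc T6 0 = 3 := by
  refine le_antisymm (Finset.sup_le fun u _ => ?_) ?_
  · fin_cases u <;> simp [dself, d01, d02, d03, d04]
  · calc (3:ℕ) = T6.dist 0 3 := d03.symm
      _ ≤ _ := Finset.le_sup (Finset.mem_univ 3)
lemma ecc1 : ecc T6 1 = 2 := by
  refine le_antisymm (Finset.sup_le fun u _ => ?_) ?_
  · fin_cases u <;> simp [dself, d10, d12, d13, d14]
  · calc (2:ℕ) = T6.dist 1 3 := d13.symm
      _ ≤ _ := Finset.le_sup (Finset.mem_univ 3)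
lemma ecc2 : ecc T6 2 = 2 := by
  refine le_antisymm (Finset.sup_le fun u _ => ?_) ?_
  · fin_cases u <;> simp [dself, d20, d21, d23, d24]
  · calc (2:ℕ) = T6.dist 2 0 := d20.symm
      _ ≤ _ := Finset.le_sup (Finset.mem_univ 0)
lemma ecc3 : ecc T6 3 = 3 := by
  refine le_antisymm (Finset.sup_le fun u _ => ?_) ?_
  · fin_cases u <;> simp [dself, d30, d31, d32, d34]
  · calc (3:ℕ) = T6.dist 3 0 := d30.symm
      _ ≤ _ := Finset.le_sup (Finset.mem_univ 0)
lemma ecc4 : ecc T6 4 = 3 := by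
  refine le_antisymm (Finset.sup_le fun u _ => ?_) ?_
  · fin_cases u <;> simp [dself, d40, d41, d42, d43]
  · calc (3:ℕ) = T6.dist 4 0 := d40.symm
      _ ≤ _ := Finset.le_sup (Finset.mem_univ 0)

lemma gdiam_T6 : gdiam T6 = 3 := by
  refine le_antisymm (Finset.sup_le fun v _ => ?_) ?_
  · fin_cases v <;> simp [ecc0, ecc1, ecc2, ecc3, ecc4]
  · calc (3:ℕ) = ecc T6 0 := ecc0.symm
      _ ≤ _ := Finset.le_sup (Finset.mem_univ 0)

lemma periph_T6 (u : Fin 5) : peripheral T6 u ↔ (u = 0 ∨ u = 3 ∨ u = 4) := by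
  unfold peripheral
  rw [gdiam_T6]
  fin_cases u <;> simp [ecc0, ecc1, ecc2, ecc3, ecc4]

lemma gnorm_T6_0 : gnorm T6 0 = 0 :=
  Nat.sInf_eq_zero.mpr (Or.inl ⟨0, (periph_T6 0).mpr (by decide), dself 0⟩)
lemma gnorm_T6_3 : gnorm T6 3 = 0 :=
  Nat.sInf_eq_zero.mpr (Or.inl ⟨3, (periph_T6 3).mpr (by decide), dself 3⟩)
lemma gnorm_T6_4 : gnorm T6 4 = 0 :=
  Nat.sInf_eq_zero.mpr (Or.inl ⟨4, (periph_T6 4).mpr (by decide), dself 4⟩)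

lemma gnorm_T6_1 : gnorm T6 1 = 1 := by
  have h1 : (1:ℕ) ∈ {n | ∃ u, peripheral T6 u ∧ T6.dist 1 u = n} :=
    ⟨0, (periph_T6 0).mpr (by decide), d10⟩
  have h0 : (0:ℕ) ∉ {n | ∃ u, peripheral T6 u ∧ T6.dist 1 u = n} := by
    rintro ⟨u, hu, hd⟩
    have := T6_conn.dist_eq_zero_iff.mp hd
    subst this
    rw [periph_T6] at hu
    revert hu; decide
  have hle := Nat.sInf_le h1
  have hne : sInf {n | ∃ u, peripheral T6 u ∧ T6.dist 1 u = n} ≠ 0 := by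
    intro hz
    rw [Nat.sInf_eq_zero] at hz
    rcases hz with h | h
    · exact h0 h
    · rw [h] at h1; exact h1
  unfold gnorm
  omega

lemma gnorm_T6_2 : gnorm T6 2 = 1 := by
  have h1 : (1:ℕ) ∈ {n | ∃ u, peripheral T6 u ∧ T6.dist 2 u = n} :=
    ⟨3, (periph_T6 3).mpr (by decide), d23⟩
  have h0 : (0:ℕ) ∉ {n | ∃ u, peripheral T6 u ∧ T6.dist 2 u = n} := by
    rintro ⟨u, hu, hd⟩
    have := T6_conn.dist_eq_zero_iff.mp hd
    subst this
    rw [periph_T6] at hu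
    revert hu; decide
  have hle := Nat.sInf_le h1
  have hne : sInf {n | ∃ u, peripheral T6 u ∧ T6.dist 2 u = n} ≠ 0 := by
    intro hz
    rw [Nat.sInf_eq_zero] at hz
    rcases hz with h | h
    · exact h0 h
    · rw [h] at h1; exact h1
  unfold gnorm
  omega

lemma NormSum_T6 : NormSum T6 = 2 := by
  unfold NormSum
  rw [Fin.sum_univ_five, gnorm_T6_0, gnorm_T6_1, gnorm_T6_2, gnorm_T6_3, gnorm_T6_4]

end T6facts

section G2facts

lemma b01 : G2.Adj 0 1 := by rw [G2_adj]; decide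
lemma b12 : G2.Adj 1 2 := by rw [G2_adj]; decide
lemma b23 : G2.Adj 2 3 := by rw [G2_adj]; decide
lemma b24 : G2.Adj 2 4 := by rw [G2_adj]; decide
lemma b04 : G2.Adj 0 4 := by rw [G2_adj]; decide

lemma G2_conn : G2.Connected := by
  have r : ∀ v : Fin 5, G2.Reachable v 2 := by
    intro v
    fin_cases v
    · exact ⟨b01.toWalk.append b12.toWalk⟩
    · exact b12.reachable
    · exact SimpleGraph.Reachable.refl 2
    · exact b23.symm.reachable
    · exact b24.symm.reachable
  exact ⟨fun u v => (r u).trans (r v).symm⟩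

lemma e01 : G2.dist 0 1 = 1 := SimpleGraph.dist_eq_one_iff_adj.mpr b01
lemma e02 : G2.dist 0 2 = 2 := dist_eq_two' (by decide) (by rw [G2_adj]; decide) 1 b01 b12
lemma e03 : G2.dist 0 3 = 3 :=
  dist_eq_three' (by decide) (by rw [G2_adj]; decide)
    (by intro w; rw [G2_adj, G2_adj]; revert w; decide) 1 2 b01 b12 b23
lemma e04 : G2.dist 0 4 = 1 := SimpleGraph.dist_eq_one_iff_adj.mpr b04
lemma e12 : G2.dist 1 2 = 1 := SimpleGraph.dist_eq_one_iff_adj.mpr b12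
lemma e13 : G2.dist 1 3 = 2 := dist_eq_two' (by decide) (by rw [G2_adj]; decide) 2 b12 b23
lemma e14 : G2.dist 1 4 = 2 := dist_eq_two' (by decide) (by rw [G2_adj]; decide) 2 b12 b24
lemma e23 : G2.dist 2 3 = 1 := SimpleGraph.dist_eq_one_iff_adj.mpr b23
lemma e24 : G2.dist 2 4 = 1 := SimpleGraph.dist_eq_one_iff_adj.mpr b24
lemma e34 : G2.dist 3 4 = 2 := dist_eq_two' (by decide) (by rw [G2_adj]; decide) 2 b23.symm b24
lemma e10 : G2.dist 1 0 = 1 := by rw [SimpleGraph.dist_comm]; exact e01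
lemma e20 : G2.dist 2 0 = 2 := by rw [SimpleGraph.dist_comm]; exact e02
lemma e30 : G2.dist 3 0 = 3 := by rw [SimpleGraph.dist_comm]; exact e03
lemma e40 : G2.dist 4 0 = 1 := by rw [SimpleGraph.dist_comm]; exact e04
lemma e21 : G2.dist 2 1 = 1 := by rw [SimpleGraph.dist_comm]; exact e12
lemma e31 : G2.dist 3 1 = 2 := by rw [SimpleGraph.dist_comm]; exact e13
lemma e41 : G2.dist 4 1 = 2 := by rw [SimpleGraph.dist_comm]; exact e14
lemma e32 : G2.dist 3 2 = 1 := by rw [SimpleGraph.dist_comm]; exact e23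
lemma e42 : G2.dist 4 2 = 1 := by rw [SimpleGraph.dist_comm]; exact e24
lemma e43 : G2.dist 4 3 = 2 := by rw [SimpleGraph.dist_comm]; exact e34
lemma eself (v : Fin 5) : G2.dist v v = 0 := SimpleGraph.dist_self

lemma ecc0' : ecc G2 0 = 3 := by
  refine le_antisymm (Finset.sup_le fun u _ => ?_) ?_
  · fin_cases u <;> simp [eself, e01, e02, e03, e04]
  · calc (3:ℕ) = G2.dist 0 3 := e03.symm
      _ ≤ _ := Finset.le_sup (Finset.mem_univ 3)
lemma ecc1' : ecc G2 1 = 2 := by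
  refine le_antisymm (Finset.sup_le fun u _ => ?_) ?_
  · fin_cases u <;> simp [eself, e10, e12, e13, e14]
  · calc (2:ℕ) = G2.dist 1 3 := e13.symm
      _ ≤ _ := Finset.le_sup (Finset.mem_univ 3)
lemma ecc2' : ecc G2 2 = 2 := by
  refine le_antisymm (Finset.sup_le fun u _ => ?_) ?_
  · fin_cases u <;> simp [eself, e20, e21, e23, e24]
  · calc (2:ℕ) = G2.dist 2 0 := e20.symm
      _ ≤ _ := Finset.le_sup (Finset.mem_univ 0)
lemma ecc3' : ecc G2 3 = 3 := by
  refine le_antisymm (Finset.sup_le fun u _ => ?_) ?_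
  · fin_cases u <;> simp [eself, e30, e31, e32, e34]
  · calc (3:ℕ) = G2.dist 3 0 := e30.symm
      _ ≤ _ := Finset.le_sup (Finset.mem_univ 0)
lemma ecc4' : ecc G2 4 = 2 := by
  refine le_antisymm (Finset.sup_le fun u _ => ?_) ?_
  · fin_cases u <;> simp [eself, e40, e41, e42, e43]
  · calc (2:ℕ) = G2.dist 4 1 := e41.symm
      _ ≤ _ := Finset.le_sup (Finset.mem_univ 1)

lemma gdiam_G2 : gdiam G2 = 3 := by
  refine le_antisymm (Finset.sup_le fun v _ => ?_) ?_
  · fin_cases v <;> simp [ecc0', ecc1', ecc2', ecc3', ecc4']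
  · calc (3:ℕ) = ecc G2 0 := ecc0'.symm
      _ ≤ _ := Finset.le_sup (Finset.mem_univ 0)

lemma periph_G2 (u : Fin 5) : peripheral G2 u ↔ (u = 0 ∨ u = 3) := by
  unfold peripheral
  rw [gdiam_G2]
  fin_cases u <;> simp [ecc0', ecc1', ecc2', ecc3', ecc4']

lemma gnorm_G2_0 : gnorm G2 0 = 0 :=
  Nat.sInf_eq_zero.mpr (Or.inl ⟨0, (periph_G2 0).mpr (by decide), eself 0⟩)
lemma gnorm_G2_3 : gnorm G2 3 = 0 :=
  Nat.sInf_eq_zero.mpr (Or.inl ⟨3, (periph_G2 3).mpr (by decide), eself 3⟩)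

lemma gnorm_G2_1 : gnorm G2 1 = 1 := by
  have h1 : (1:ℕ) ∈ {n | ∃ u, peripheral G2 u ∧ G2.dist 1 u = n} :=
    ⟨0, (periph_G2 0).mpr (by decide), e10⟩
  have h0 : (0:ℕ) ∉ {n | ∃ u, peripheral G2 u ∧ G2.dist 1 u = n} := by
    rintro ⟨u, hu, hd⟩
    have := G2_conn.dist_eq_zero_iff.mp hd
    subst this
    rw [periph_G2] at hu
    revert hu; decide
  have hle := Nat.sInf_le h1
  have hne : sInf {n | ∃ u, peripheral G2 u ∧ G2.dist 1 u = n} ≠ 0 := by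
    intro hz
    rw [Nat.sInf_eq_zero] at hz
    rcases hz with h | h
    · exact h0 h
    · rw [h] at h1; exact h1
  unfold gnorm
  omega

lemma gnorm_G2_2 : gnorm G2 2 = 1 := by
  have h1 : (1:ℕ) ∈ {n | ∃ u, peripheral G2 u ∧ G2.dist 2 u = n} :=
    ⟨3, (periph_G2 3).mpr (by decide), e23⟩
  have h0 : (0:ℕ) ∉ {n | ∃ u, peripheral G2 u ∧ G2.dist 2 u = n} := by
    rintro ⟨u, hu, hd⟩
    have := G2_conn.dist_eq_zero_iff.mp hd
    subst this
    rw [periph_G2] at hu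
    revert hu; decide
  have hle := Nat.sInf_le h1
  have hne : sInf {n | ∃ u, peripheral G2 u ∧ G2.dist 2 u = n} ≠ 0 := by
    intro hz
    rw [Nat.sInf_eq_zero] at hz
    rcases hz with h | h
    · exact h0 h
    · rw [h] at h1; exact h1
  unfold gnorm
  omega

lemma gnorm_G2_4 : gnorm G2 4 = 1 := by
  have h1 : (1:ℕ) ∈ {n | ∃ u, peripheral G2 u ∧ G2.dist 4 u = n} :=
    ⟨0, (periph_G2 0).mpr (by decide), e40⟩
  have h0 : (0:ℕ) ∉ {n | ∃ u, peripheral G2 u ∧ G2.dist 4 u = n} := by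
    rintro ⟨u, hu, hd⟩
    have := G2_conn.dist_eq_zero_iff.mp hd
    subst this
    rw [periph_G2] at hu
    revert hu; decide
  have hle := Nat.sInf_le h1
  have hne : sInf {n | ∃ u, peripheral G2 u ∧ G2.dist 4 u = n} ≠ 0 := by
    intro hz
    rw [Nat.sInf_eq_zero] at hz
    rcases hz with h | h
    · exact h0 h
    · rw [h] at h1; exact h1
  unfold gnorm
  omega

lemma NormSum_G2 : NormSum G2 = 3 := by
  unfold NormSum
  rw [Fin.sum_univ_five, gnorm_G2_0, gnorm_G2_1, gnorm_G2_2, gnorm_G2_3, gnorm_G2_4]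

end G2facts

theorem stmt_6 :
    (∃ (W : Type) (_ : Fintype W) (G : SimpleGraph W) (u v : W),
      G.Connected ∧ ¬ G.Adj u v ∧ u ≠ v ∧
      NormSum G < NormSum (G ⊔ SimpleGraph.fromEdgeSet {s(u, v)})) ∧
    T6.Connected ∧ ¬ T6.Adj 0 4 ∧
    NormSum T6 = 2 ∧ NormSum (T6 ⊔ SimpleGraph.fromEdgeSet {s((0 : Fin 5), 4)}) = 3 := by
  have hna : ¬ T6.Adj 0 4 := by rw [T6_adj]; decide
  have hG2 : NormSum (T6 ⊔ SimpleGraph.fromEdgeSet {s((0 : Fin 5), 4)}) = 3 := NormSum_G2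
  refine ⟨⟨Fin 5, inferInstance, T6, 0, 4, T6_conn, hna, by decide, ?_⟩, T6_conn, hna,
    NormSum_T6, hG2⟩
  rw [NormSum_T6, hG2]
  omega
end

section
/- In a tree T, λ(v) = ecc(v) − norm(v) attains its maximum value, which equals diam(T), exactly at the peripheral vertices. -/
open Finset

variable {V : Type*}

theorem stmt_7 [Fintype V] (G : SimpleGraph V) (hT : G.IsTree) :
    (∀ v : V, lam G v ≤ gdiam G) ∧
    (∀ v : V, lam G v = gdiam G ↔ peripheral G v) := by
  have hecc_le : ∀ v : V, ecc G v ≤ gdiam G := fun v =>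
    Finset.le_sup (Finset.mem_univ v)
  have hdist_le : ∀ v u : V, G.dist v u ≤ ecc G v := fun v u =>
    Finset.le_sup (Finset.mem_univ u)
  have hnorm_le : ∀ v : V, gnorm G v ≤ ecc G v := by
    intro v
    have : Nonempty V := ⟨v⟩
    obtain ⟨u, -, hu⟩ := Finset.exists_mem_eq_sup Finset.univ Finset.univ_nonempty
      (fun v => ecc G v)
    have hper : peripheral G u := hu.symm
    exact le_trans (Nat.sInf_le ⟨u, hper, rfl⟩) (hdist_le v u)
  refine ⟨fun v => le_trans (Nat.sub_le _ _) (hecc_le v), fun v => ?_⟩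
  constructor
  · intro h
    have h1 : gdiam G ≤ ecc G v := h ▸ Nat.sub_le _ _
    exact le_antisymm (hecc_le v) h1
  · intro h
    have h0 : gnorm G v = 0 :=
      Nat.le_zero.mp (le_of_le_of_eq (Nat.sInf_le ⟨v, h, G.dist_self⟩) rfl)
    have : lam G v = ecc G v := by simp [lam, h0]
    rw [this]; exact h
end

section
/- Let T be a tree with diameter d and v_0 v_1 ... v_d a longest path. Then for each 0 ≤ i ≤ d, λ(v_i) = ecc(v_i) − norm(v_i) ≤ |d − 2i|. -/
open Finset

variable {V : Type*}

section Aux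

variable {G : SimpleGraph V}

lemma walk_to_getVert : ∀ {x y : V} (p : G.Walk x y) (i : ℕ),
    ∃ q : G.Walk x (p.getVert i), q.length ≤ i
  | x, _, .nil, i => ⟨(SimpleGraph.Walk.nil).copy rfl rfl, by simp⟩
  | x, y, .cons h r, 0 => ⟨(SimpleGraph.Walk.nil).copy rfl (by simp), by simp⟩
  | x, y, .cons h r, (i+1) => by
      obtain ⟨q, hq⟩ := walk_to_getVert r i
      exact ⟨(SimpleGraph.Walk.cons h q).copy rfl
        (by simp [SimpleGraph.Walk.getVert_cons_succ]), by simpa using hq⟩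

lemma walk_from_getVert : ∀ {x y : V} (p : G.Walk x y) (i : ℕ),
    ∃ q : G.Walk (p.getVert i) y, q.length ≤ p.length - i
  | x, _, .nil, i => ⟨(SimpleGraph.Walk.nil).copy rfl rfl, by simp⟩
  | x, y, .cons h r, 0 => ⟨(SimpleGraph.Walk.cons h r).copy (by simp) rfl, by simp⟩
  | x, y, .cons h r, (i+1) => by
      obtain ⟨q, hq⟩ := walk_from_getVert r i
      refine ⟨q.copy (by simp [SimpleGraph.Walk.getVert_cons_succ]) rfl, ?_⟩
      simpa using hq

lemma path_length_eq_dist (hT : G.IsTree) {x y : V} (p : G.Walk x y) (hp : p.IsPath) :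
    p.length = G.dist x y := by
  obtain ⟨q, hq, hql⟩ := hT.isConnected.exists_path_of_dist x y
  rw [(hT.existsUnique_path x y).unique hp hq, hql]

end Aux

theorem stmt_12 [Fintype V] (G : SimpleGraph V) (hT : G.IsTree)
    {x y : V} (p : G.Walk x y) (hp : p.IsPath) (hlen : p.length = gdiam G)
    (i : ℕ) (hi : i ≤ p.length) :
    lam G (p.getVert i) ≤ ((gdiam G : ℤ) - 2 * i).natAbs := by
  classical
  have hconn := hT.isConnected
  set v := p.getVert i with hv
  set d := p.length with hd
  -- p is a geodesic
  have hgeo : p.length = G.dist x y := path_length_eq_dist hT p hp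
  -- distances along the path
  have hdx : G.dist x v ≤ i := by
    obtain ⟨q, hq⟩ := walk_to_getVert (G := G) p i
    exact (SimpleGraph.dist_le q).trans hq
  have hdy : G.dist v y ≤ d - i := by
    obtain ⟨q, hq⟩ := walk_from_getVert (G := G) p i
    exact (SimpleGraph.dist_le q).trans hq
  have htri : G.dist x y ≤ G.dist x v + G.dist v y := hconn.dist_triangle
  have hdx' : G.dist x v = i := by omega
  have hdy' : G.dist v y = d - i := by omega
  -- eccentricity bounds
  have hecc_le : ∀ u : V, G.dist v u ≤ max i (d - i) := by
    intro u
    obtain ⟨a, ha, hal⟩ := hconn.exists_path_of_dist x u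
    obtain ⟨b, hb, hbl⟩ := hconn.exists_path_of_dist u y
    have hdxu : G.dist x u ≤ d := by
      calc G.dist x u ≤ ecc G x := Finset.le_sup (Finset.mem_univ u)
        _ ≤ gdiam G := Finset.le_sup (Finset.mem_univ x)
        _ = d := hlen.symm
    have hduy : G.dist u y ≤ d := by
      calc G.dist u y = G.dist y u := SimpleGraph.dist_comm
        _ ≤ ecc G y := Finset.le_sup (Finset.mem_univ u)
        _ ≤ gdiam G := Finset.le_sup (Finset.mem_univ y)
        _ = d := hlen.symm
    -- v lies on a or on b
    have hvmem : v ∈ a.support ∨ v ∈ b.support := by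
      have hbp : (a.append b).bypass.IsPath := SimpleGraph.Walk.bypass_isPath _
      have hpeq : p = (a.append b).bypass := (hT.existsUnique_path x y).unique hp hbp
      have hvp : v ∈ p.support := by
        rw [SimpleGraph.Walk.mem_support_iff_exists_getVert]
        exact ⟨i, rfl, hi⟩
      have := SimpleGraph.Walk.support_bypass_subset (a.append b) (hpeq ▸ hvp)
      rwa [SimpleGraph.Walk.mem_support_append_iff] at this
    rcases hvmem with hm | hm
    · -- dist v u ≤ dist x u - i ≤ d - i
      have hsplit : (a.takeUntil v hm).length + (a.dropUntil v hm).length = a.length := by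
        rw [← SimpleGraph.Walk.length_append, SimpleGraph.Walk.take_spec]
      have h1 : G.dist x v ≤ (a.takeUntil v hm).length := SimpleGraph.dist_le _
      have h2 : G.dist v u ≤ (a.dropUntil v hm).length := SimpleGraph.dist_le _
      have : G.dist v u ≤ d - i := by omega
      omega
    · -- dist v u ≤ i
      have hsplit : (b.takeUntil v hm).length + (b.dropUntil v hm).length = b.length := by
        rw [← SimpleGraph.Walk.length_append, SimpleGraph.Walk.take_spec]
      have h1 : G.dist u v ≤ (b.takeUntil v hm).length := SimpleGraph.dist_le _
      have h2 : G.dist v y ≤ (b.dropUntil v hm).length := SimpleGraph.dist_le _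
      have hvu : G.dist v u = G.dist u v := SimpleGraph.dist_comm
      have : G.dist v u ≤ i := by omega
      omega
  have hecc : ecc G v ≤ max i (d - i) :=
    Finset.sup_le fun u _ => hecc_le u
  -- x is peripheral
  have heccx : peripheral G x := by
    have h1 : ecc G x ≤ gdiam G := Finset.le_sup (Finset.mem_univ x)
    have h2 : gdiam G ≤ ecc G x := by
      calc gdiam G = G.dist x y := by rw [← hlen]; exact hgeo
        _ ≤ ecc G x := Finset.le_sup (Finset.mem_univ y)
    exact le_antisymm h1 h2
  -- lower bound on gnorm
  have hnorm : d - max i (d - i) ≤ gnorm G v := by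
    have : gnorm G v = sInf {n | ∃ u, peripheral G u ∧ G.dist v u = n} := rfl
    rw [this]
    refine le_csInf ⟨G.dist v x, x, heccx, rfl⟩ ?_
    rintro n ⟨u, hu, rfl⟩
    have h1 : ecc G u ≤ G.dist u v + ecc G v := by
      apply Finset.sup_le
      intro w _
      calc G.dist u w ≤ G.dist u v + G.dist v w := hconn.dist_triangle
        _ ≤ G.dist u v + ecc G v := by
            exact Nat.add_le_add_left (Finset.le_sup (Finset.mem_univ w)) _
    have h2 : ecc G u = d := by rw [hu, ← hlen]
    have h3 : G.dist v u = G.dist u v := SimpleGraph.dist_comm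
    omega
  have hlam : lam G v = ecc G v - gnorm G v := rfl
  have hgd : gdiam G = d := hlen.symm
  rw [hlam, hgd]
  omega
end

section
/- For any tree T on n ≥ 8 vertices, Λ(T) ≤ ⌊(n²+1)/2⌋. -/
open Finset

variable {V : Type*}

section Aux
open SimpleGraph

lemma tree_path_length {G : SimpleGraph V} (hT : G.IsTree) {u v : V} {w : G.Walk u v}
    (hw : w.IsPath) : w.length = G.dist u v := by
  classical
  obtain ⟨w', hw'⟩ := hT.isConnected.exists_walk_length_eq_dist u v
  obtain ⟨P, _, hun⟩ := hT.existsUnique_path u v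
  have h1 : w = w'.bypass := (hun w hw).trans (hun _ w'.bypass_isPath).symm
  have h2 : G.dist u v ≤ w'.bypass.length := SimpleGraph.dist_le _
  have h3 : w'.bypass.length ≤ w'.length := w'.length_bypass_le
  rw [h1]; omega

lemma dist_split {G : SimpleGraph V} (hT : G.IsTree) {a b y : V} {w : G.Walk a b}
    (hw : w.IsPath) (hy : y ∈ w.support) :
    G.dist a y + G.dist y b = G.dist a b := by
  classical
  have h1 := tree_path_length hT (hw.takeUntil hy)
  have h2 := tree_path_length hT (hw.dropUntil hy)
  have h3 : (w.takeUntil y hy).length + (w.dropUntil y hy).length = w.length := by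
    rw [← SimpleGraph.Walk.length_append, w.take_spec hy]
  rw [tree_path_length hT hw] at h3
  omega

lemma tree_median {G : SimpleGraph V} (hT : G.IsTree) {p q : V} (P : G.Walk p q)
    (hP : P.IsPath) (v : V) :
    ∃ m ∈ P.support, G.dist v p = G.dist v m + G.dist m p ∧
      G.dist v q = G.dist v m + G.dist m q := by
  classical
  obtain ⟨m, hmS, hmin⟩ := (P.support.toFinset).exists_min_image (fun x => G.dist v x)
    ⟨p, by simp⟩
  rw [List.mem_toFinset] at hmS
  obtain ⟨w0⟩ := hT.isConnected v m
  set w := w0.bypass with hwdef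
  have hwp : w.IsPath := w0.bypass_isPath
  have key : ∀ y ∈ w.support, y ∈ P.support → y = m := by
    intro y hy hyP
    have h1 := dist_split hT hwp hy
    have h2 := hmin y (List.mem_toFinset.mpr hyP)
    have : G.dist y m = 0 := by omega
    have := hT.isConnected.dist_eq_zero_iff.mp this
    exact this
  have main : ∀ (r : V) (s : G.Walk m r), s.IsPath → (∀ y ∈ s.support, y ∈ P.support) →
      G.dist v r = G.dist v m + G.dist m r := by
    intro r s hs hsub
    have happ : (w.append s).IsPath := by
      rw [SimpleGraph.Walk.isPath_def, SimpleGraph.Walk.support_append]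
      refine List.Nodup.append hwp.support_nodup (hs.support_nodup.tail) ?_
      intro y hy hyt
      have hyS : y ∈ s.support := List.mem_of_mem_tail hyt
      have : y = m := key y hy (hsub y hyS)
      subst this
      have : s.support = y :: s.support.tail := s.support_eq_cons ▸ rfl
      have hnd := hs.support_nodup
      rw [s.support_eq_cons] at hnd
      exact (List.nodup_cons.mp hnd).1 hyt
    have hl := tree_path_length hT happ
    rw [SimpleGraph.Walk.length_append, tree_path_length hT hwp,
      tree_path_length hT hs] at hl
    omega
  refine ⟨m, hmS, ?_, ?_⟩
  · exact main p (P.takeUntil m hmS).reverse (hP.takeUntil hmS).reverse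
      (fun y hy => P.support_takeUntil_subset hmS
        (by rwa [SimpleGraph.Walk.support_reverse, List.mem_reverse] at hy))
  · exact main q (P.dropUntil m hmS) (hP.dropUntil hmS)
      (fun y hy => P.support_dropUntil_subset hmS hy)

lemma tree_seg {G : SimpleGraph V} (hT : G.IsTree) {p q : V} {P : G.Walk p q}
    (hP : P.IsPath) {v w : V} (hv : v ∈ P.support) (hw : w ∈ P.support)
    (h : G.dist p v ≤ G.dist p w) :
    G.dist p v + G.dist v w = G.dist p w := by
  classical
  have hw' : w ∈ ((P.takeUntil v hv).append (P.dropUntil v hv)).support := by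
    rwa [P.take_spec hv]
  rw [SimpleGraph.Walk.mem_support_append_iff] at hw'
  rcases hw' with hw1 | hw2
  · have h1 := dist_split hT (hP.takeUntil hv) hw1
    have h2 := tree_path_length hT (hP.takeUntil hv)
    have h3 : G.dist p v = (P.takeUntil v hv).length := (tree_path_length hT (hP.takeUntil hv)).symm
    -- h1 : dist p w + dist w v = dist p v
    have c : G.dist v w = G.dist w v := SimpleGraph.dist_comm
    omega
  · have h1 := dist_split hT (hP.dropUntil hv) hw2
    -- h1 : dist v w + dist w q = dist v q
    have h2 := dist_split hT hP hv   -- dist p v + dist v q = dist p q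
    have h3 := dist_split hT hP hw   -- dist p w + dist w q = dist p q
    omega

lemma ecc_bound {G : SimpleGraph V} [Fintype V] (hT : G.IsTree) {p q : V} (P : G.Walk p q)
    (hP : P.IsPath)
    (hup : ∀ u, G.dist u p ≤ G.dist p q) (huq : ∀ u, G.dist u q ≤ G.dist p q) (v : V) :
    (Finset.univ.sup fun u => G.dist v u) ≤ max (G.dist v p) (G.dist v q) := by
  apply Finset.sup_le
  intro u _
  obtain ⟨m, hm, hvp, hvq⟩ := tree_median hT P hP v
  obtain ⟨m', hm', hup', huq'⟩ := tree_median hT P hP u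
  have hsm := dist_split hT hP hm    -- dist p m + dist m q = dist p q
  have hsm' := dist_split hT hP hm'
  have tri : G.dist v u ≤ G.dist v m + G.dist m m' + G.dist m' u := by
    calc G.dist v u ≤ G.dist v m' + G.dist m' u := hT.isConnected.dist_triangle
    _ ≤ (G.dist v m + G.dist m m') + G.dist m' u :=
        Nat.add_le_add_right hT.isConnected.dist_triangle _
  have c1 : G.dist m p = G.dist p m := SimpleGraph.dist_comm
  have c2 : G.dist m' p = G.dist p m' := SimpleGraph.dist_comm
  have c4 : G.dist m' u = G.dist u m' := SimpleGraph.dist_comm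
  have c5 : G.dist m' m = G.dist m m' := SimpleGraph.dist_comm
  have hupD := hup u
  have huqD := huq u
  rcases le_total (G.dist p m) (G.dist p m') with h | h
  · have hseg := tree_seg hT hP hm hm' h
    omega
  · have hseg := tree_seg hT hP hm' hm h
    omega

lemma sum_min_lb : ∀ d : ℕ, d * d ≤ 4 * (∑ x ∈ Finset.range (d + 1), min x (d - x)) + 1 := by
  intro d
  induction d using Nat.strong_induction_on with
  | _ d ih =>
    match d with
    | 0 => simp
    | 1 => simp
    | (e + 2) =>
      have he := ih e (by omega)
      have hstep : (∑ x ∈ Finset.range (e + 3), min x (e + 2 - x))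
          = (∑ x ∈ Finset.range (e + 1), min x (e - x)) + (e + 1) := by
        rw [Finset.sum_range_succ, show e + 2 - (e + 2) = 0 by omega]
        rw [Finset.sum_range_succ']
        have : ∀ x ∈ Finset.range (e + 1), min (x + 1) (e + 2 - (x + 1)) = min x (e - x) + 1 := by
          intro x hx
          rw [Finset.mem_range] at hx
          omega
        rw [Finset.sum_congr rfl this, Finset.sum_add_distrib]
        simp [Finset.card_range]
      rw [hstep]
      nlinarith

end Aux

open SimpleGraph in
theorem stmt_15 [Fintype V] (G : SimpleGraph V) (hT : G.IsTree)
    (hn : 8 ≤ Fintype.card V) :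
    LamSum G ≤ (Fintype.card V ^ 2 + 1) / 2 := by
  classical
  have hconn := hT.isConnected
  have hnonempty : Nonempty V := Fintype.card_pos_iff.mp (by omega)
  set n := Fintype.card V with hn_def
  obtain ⟨p, -, hp⟩ := Finset.exists_mem_eq_sup (Finset.univ : Finset V) univ_nonempty
    (fun v => ecc G v)
  obtain ⟨q, -, hq⟩ := Finset.exists_mem_eq_sup (Finset.univ : Finset V) univ_nonempty
    (fun u => G.dist p u)
  have hgd : gdiam G = ecc G p := hp
  have heccp : ecc G p = G.dist p q := hq
  set d := gdiam G with hd_def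
  have hpq : G.dist p q = d := by rw [hgd, heccp]
  have ecc_ge : ∀ v u : V, G.dist v u ≤ ecc G v := fun v u => Finset.le_sup (mem_univ u)
  have ecc_le_d : ∀ v : V, ecc G v ≤ d := fun v =>
    Finset.le_sup (f := fun v => ecc G v) (mem_univ v)
  have hperi_p : peripheral G p := hgd.symm
  have heccq : ecc G q = d := le_antisymm (ecc_le_d q)
    (by calc d = G.dist p q := hpq.symm
        _ = G.dist q p := SimpleGraph.dist_comm
        _ ≤ ecc G q := ecc_ge q p)
  have hdup : ∀ u, G.dist u p ≤ G.dist p q := fun u => by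
    rw [SimpleGraph.dist_comm, hpq]
    exact le_trans (ecc_ge p u) (le_of_eq (heccp.trans hpq))
  have hduq : ∀ u, G.dist u q ≤ G.dist p q := fun u => by
    rw [hpq]
    exact le_trans (ecc_ge u q) (ecc_le_d u) |>.trans (le_of_eq rfl) |>.trans (by
      exact le_of_eq rfl)
  have gnorm_le : ∀ v, gnorm G v ≤ G.dist v p := fun v => Nat.sInf_le ⟨p, hperi_p, rfl⟩
  have hg1 : ∀ v, d ≤ gnorm G v + ecc G v := by
    intro v
    have hmem : (gnorm G v) ∈ {k | ∃ u, peripheral G u ∧ G.dist v u = k} :=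
      Nat.sInf_mem ⟨G.dist v p, p, hperi_p, rfl⟩
    obtain ⟨u, hu, hdu⟩ := hmem
    have : ecc G u ≤ G.dist u v + ecc G v := by
      apply Finset.sup_le
      intro w _
      calc G.dist u w ≤ G.dist u v + G.dist v w := hconn.dist_triangle
        _ ≤ G.dist u v + ecc G v := Nat.add_le_add_left (ecc_ge v w) _
    have hcv : G.dist u v = G.dist v u := SimpleGraph.dist_comm
    have : d ≤ G.dist u v + ecc G v := le_trans (le_of_eq hu.symm) this
    omega
  -- geodesic path
  obtain ⟨P₀⟩ := hconn.preconnected p q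
  set P := P₀.bypass with hPdef
  have hP : P.IsPath := P₀.bypass_isPath
  have hPlen : P.length = d := by rw [tree_path_length hT hP, hpq]
  have hdn : d + 1 ≤ n := by
    have := hP.length_lt
    omega
  have hd1 : 1 ≤ d := by
    obtain ⟨a, b, hab⟩ := Fintype.exists_pair_of_one_lt_card (by omega : 1 < n)
    have : 0 < G.dist a b := hconn.pos_dist_of_ne hab
    have : G.dist a b ≤ d := le_trans (ecc_ge a b) (ecc_le_d a)
    omega
  set S := P.support.toFinset with hSdef
  have hScard : S.card = d + 1 := by
    rw [hSdef, List.toFinset_card_of_nodup hP.support_nodup, SimpleGraph.Walk.length_support,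
      hPlen]
  set F : ℕ → ℕ := fun x => d - 2 * min x (d - x) with hFdef
  have key : ∀ v ∈ S, lam G v ≤ F (G.dist p v) := by
    intro v hv
    rw [hSdef, List.mem_toFinset] at hv
    have hsplit : G.dist p v + G.dist v q = d := by rw [dist_split hT hP hv, hpq]
    have hecc : ecc G v ≤ max (G.dist v p) (G.dist v q) := ecc_bound hT P hP hdup hduq v
    have hlam : lam G v = ecc G v - gnorm G v := rfl
    have hcv : G.dist v p = G.dist p v := SimpleGraph.dist_comm
    have h1 := hg1 v
    have h2 := gnorm_le v
    have h3 := ecc_ge v p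
    simp only [hFdef]
    omega
  have offpath : ∀ v : V, lam G v ≤ d := by
    intro v
    have hlam : lam G v = ecc G v - gnorm G v := rfl
    have h1 := hg1 v
    have h2 := ecc_le_d v
    omega
  have hinj : ∀ v ∈ S, ∀ w ∈ S, G.dist p v = G.dist p w → v = w := by
    intro v hv w hw hvw
    rw [hSdef, List.mem_toFinset] at hv hw
    have := tree_seg hT hP hv hw (le_of_eq hvw)
    have : G.dist v w = 0 := by omega
    exact hconn.dist_eq_zero_iff.mp this
  have hsub : S.image (fun v => G.dist p v) ⊆ Finset.range (d + 1) := by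
    intro x hx
    rw [Finset.mem_image] at hx
    obtain ⟨v, hv, rfl⟩ := hx
    rw [hSdef, List.mem_toFinset] at hv
    have hsplit : G.dist p v + G.dist v q = G.dist p q := dist_split hT hP hv
    rw [Finset.mem_range]
    omega
  have hA : ∑ v ∈ S, lam G v ≤ ∑ x ∈ Finset.range (d + 1), F x := by
    calc ∑ v ∈ S, lam G v ≤ ∑ v ∈ S, F (G.dist p v) := Finset.sum_le_sum key
      _ = ∑ x ∈ S.image (fun v => G.dist p v), F x := (Finset.sum_image hinj).symm
      _ ≤ ∑ x ∈ Finset.range (d + 1), F x :=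
          Finset.sum_le_sum_of_subset hsub
  have hB : ∑ v ∈ Sᶜ, lam G v ≤ (n - (d + 1)) * d := by
    calc ∑ v ∈ Sᶜ, lam G v ≤ Sᶜ.card * d :=
          Finset.sum_le_card_nsmul _ _ _ (fun v _ => offpath v)
      _ = (n - (d + 1)) * d := by rw [Finset.card_compl, hScard]
  have hFsum : 2 * (∑ x ∈ Finset.range (d + 1), F x) ≤ (d + 1) ^ 2 := by
    have hsum_eq : (∑ x ∈ Finset.range (d + 1), F x)
        + 2 * (∑ x ∈ Finset.range (d + 1), min x (d - x)) = (d + 1) * d := by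
      rw [Finset.mul_sum, ← Finset.sum_add_distrib]
      rw [Finset.sum_congr rfl (fun x hx => ?_), Finset.sum_const, Finset.card_range,
        smul_eq_mul]
      rw [Finset.mem_range] at hx
      simp only [hFdef]
      omega
    have := sum_min_lb d
    nlinarith
  have hsplit_sum : LamSum G = (∑ v ∈ S, lam G v) + ∑ v ∈ Sᶜ, lam G v := by
    rw [LamSum, ← Finset.sum_add_sum_compl S (lam G)]
  have h2L : LamSum G * 2 ≤ n ^ 2 + 1 := by
    have hk : n = d + 1 + (n - (d + 1)) := by omega
    set k := n - (d + 1) with hkdef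
    have : LamSum G ≤ (∑ x ∈ Finset.range (d + 1), F x) + k * d := by
      rw [hsplit_sum]; exact Nat.add_le_add hA hB
    nlinarith [hFsum, hk]
  rw [Nat.le_div_iff_mul_le (by norm_num : 0 < 2)]
  exact h2L
end

section
/- In any tree T, at most k vertices have normality exactly 2, where k = |P(T)| is the number of peripheral vertices. More precisely, if u and v are distinct non-peripheral vertices with norm(u) = norm(v) = 2 realized by the same peripheral vertex w (d(u,w) = d(v,w) = 2), then one obtains a contradiction with the diameter; hence each peripheral vertex has at most one vertex at distance 2 with normality 2. -/
open Finset

variable {V : Type*}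

section Aux

open SimpleGraph

/-- In a tree, adjacent vertices have different distances to any vertex. -/
lemma tree_adj_dist_ne {G : SimpleGraph V} (hT : G.IsTree) {a c b : V} (h : G.Adj a c) :
    G.dist a b ≠ G.dist c b := by
  classical
  intro heq
  obtain ⟨q, hq⟩ := hT.isConnected.exists_walk_length_eq_dist c b
  have hqp : q.IsPath := q.isPath_of_length_eq_dist hq
  by_cases ha : a ∈ q.support
  · have hsplit := q.take_spec ha
    have hlen : (q.takeUntil a ha).length + (q.dropUntil a ha).length = q.length := by
      rw [← Walk.length_append, hsplit]
    have h1 : G.dist a b ≤ (q.dropUntil a ha).length := dist_le _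
    have h0 : (q.takeUntil a ha).length = 0 := by omega
    have hca : c = a := Walk.eq_of_length_eq_zero h0
    exact G.irrefl (hca ▸ h)
  · obtain ⟨p, hp⟩ := hT.isConnected.exists_walk_length_eq_dist a b
    have hpp : p.IsPath := p.isPath_of_length_eq_dist hp
    have hcons : (Walk.cons h q).IsPath := hqp.cons ha
    have huniq := hT.IsAcyclic.path_unique ⟨p, hpp⟩ ⟨Walk.cons h q, hcons⟩
    have hlen : p.length = (Walk.cons h q).length :=
      congrArg (fun P : G.Path a b => P.1.length) huniq
    rw [Walk.length_cons, hp, hq, heq] at hlen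
    omega

/-- In a tree, the length of any walk has the same parity as the distance
between its endpoints. -/
lemma tree_walk_parity {G : SimpleGraph V} (hT : G.IsTree) {a b : V} (p : G.Walk a b) :
    p.length % 2 = G.dist a b % 2 := by
  induction p with
  | nil => simp [dist_self]
  | @cons a c b h q ih =>
    have hne : G.dist a b ≠ G.dist c b := tree_adj_dist_ne hT h
    have hac : G.dist a c = 1 := dist_eq_one_iff_adj.mpr h
    have hca : G.dist c a = 1 := dist_eq_one_iff_adj.mpr h.symm
    have h1 : G.dist a b ≤ G.dist a c + G.dist c b := hT.isConnected.dist_triangle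
    have h2 : G.dist c b ≤ G.dist c a + G.dist a b := hT.isConnected.dist_triangle
    rw [Walk.length_cons]
    omega

/-- In a tree, a vertex on a geodesic is determined by its distance from the endpoint. -/
lemma tree_geodesic_unique {G : SimpleGraph V} (hT : G.IsTree) {w z u v : V}
    (hu : G.dist w u + G.dist u z = G.dist w z)
    (hv : G.dist w v + G.dist v z = G.dist w z)
    (huv : G.dist w u = G.dist w v) : u = v := by
  obtain ⟨p1, hp1⟩ := hT.isConnected.exists_walk_length_eq_dist w u
  obtain ⟨p2, hp2⟩ := hT.isConnected.exists_walk_length_eq_dist u z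
  obtain ⟨q1, hq1⟩ := hT.isConnected.exists_walk_length_eq_dist w v
  obtain ⟨q2, hq2⟩ := hT.isConnected.exists_walk_length_eq_dist v z
  have hP : (p1.append p2).IsPath := (p1.append p2).isPath_of_length_eq_dist
    (by rw [Walk.length_append, hp1, hp2, hu])
  have hQ : (q1.append q2).IsPath := (q1.append q2).isPath_of_length_eq_dist
    (by rw [Walk.length_append, hq1, hq2, hv])
  have huniq := hT.IsAcyclic.path_unique ⟨p1.append p2, hP⟩ ⟨q1.append q2, hQ⟩
  have heq : p1.append p2 = q1.append q2 := congrArg Subtype.val huniq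
  have hu' : (p1.append p2).getVert p1.length = u := by
    rw [Walk.getVert_append]
    simp [Walk.getVert_zero]
  have hv' : (q1.append q2).getVert q1.length = v := by
    rw [Walk.getVert_append]
    simp [Walk.getVert_zero]
  have hlen : p1.length = q1.length := by rw [hp1, hq1, huv]
  rw [← hu', heq, hlen, hv']

end Aux

theorem stmt_18 [Fintype V] (G : SimpleGraph V) (hT : G.IsTree) :
    {v : V | gnorm G v = 2}.ncard ≤ {v : V | peripheral G v}.ncard ∧
    (∀ w u v : V, peripheral G w → ¬ peripheral G u → ¬ peripheral G v →
      gnorm G u = 2 → gnorm G v = 2 → G.dist u w = 2 → G.dist v w = 2 → u = v) := by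
  have key : ∀ w u v : V, peripheral G w → ¬ peripheral G u → ¬ peripheral G v →
      gnorm G u = 2 → gnorm G v = 2 → G.dist u w = 2 → G.dist v w = 2 → u = v := by
    intro w u v hw hu hv hnu hnv hduw hdvw
    obtain ⟨z, -, hz⟩ := Finset.exists_mem_eq_sup Finset.univ ⟨w, Finset.mem_univ w⟩
      (fun x => G.dist w x)
    have hwz : G.dist w z = gdiam G := by
      have : ecc G w = G.dist w z := hz
      rw [← this]; exact hw
    have key1 : ∀ x : V, ¬ peripheral G x → G.dist w x = 2 →
        G.dist w x + G.dist x z = G.dist w z := by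
      intro x hx hwx
      have heccx_le : ecc G x ≤ gdiam G := Finset.le_sup (f := ecc G) (Finset.mem_univ x)
      have heccx_lt : ecc G x < gdiam G := lt_of_le_of_ne heccx_le hx
      have hdxz_le : G.dist x z ≤ ecc G x := Finset.le_sup (Finset.mem_univ z)
      have htri : G.dist w z ≤ G.dist w x + G.dist x z := hT.isConnected.dist_triangle
      obtain ⟨p1, hp1⟩ := hT.isConnected.exists_walk_length_eq_dist w x
      obtain ⟨p2, hp2⟩ := hT.isConnected.exists_walk_length_eq_dist x z
      have hpar := tree_walk_parity hT (p1.append p2)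
      rw [SimpleGraph.Walk.length_append, hp1, hp2] at hpar
      omega
    have hu2 : G.dist w u = 2 := by
      rw [SimpleGraph.dist_comm] at hduw; exact hduw
    have hv2 : G.dist w v = 2 := by
      rw [SimpleGraph.dist_comm] at hdvw; exact hdvw
    exact tree_geodesic_unique hT (key1 u hu hu2) (key1 v hv hv2) (by rw [hu2, hv2])
  refine ⟨?_, key⟩
  rcases isEmpty_or_nonempty V with hV | hV
  · have h1 : {v : V | gnorm G v = 2} = ∅ := Set.eq_empty_of_isEmpty _
    simp [h1]
  · obtain ⟨r⟩ := hV
    have hex : ∀ v : V, ∃ w, gnorm G v = 2 → peripheral G w ∧ G.dist v w = 2 := by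
      intro v
      by_cases h : gnorm G v = 2
      · have hne : {n | ∃ u, peripheral G u ∧ G.dist v u = n}.Nonempty := by
          obtain ⟨p, -, hp⟩ := Finset.exists_mem_eq_sup Finset.univ
            ⟨r, Finset.mem_univ r⟩ (ecc G)
          exact ⟨G.dist v p, p, hp.symm, rfl⟩
        have hmem := Nat.sInf_mem hne
        have h2 : sInf {n | ∃ u, peripheral G u ∧ G.dist v u = n} = 2 := h
        rw [h2] at hmem
        obtain ⟨u, hu1, hu2⟩ := hmem
        exact ⟨u, fun _ => ⟨hu1, hu2⟩⟩
      · exact ⟨r, fun h' => absurd h' h⟩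
    choose f hf using hex
    have hnp : ∀ x : V, gnorm G x = 2 → ¬ peripheral G x := by
      intro x hx hpx
      have h0 : gnorm G x = 0 :=
        Nat.le_zero.mp (Nat.sInf_le ⟨x, hpx, SimpleGraph.dist_self⟩)
      omega
    apply Set.ncard_le_ncard_of_injOn f
    · intro v hv
      exact (hf v hv).1
    · intro a ha b hb hab
      have ha' : gnorm G a = 2 := ha
      have hb' : gnorm G b = 2 := hb
      exact key (f a) a b (hf a ha').1 (hnp a ha') (hnp b hb') ha' hb'
        (hf a ha').2 (hab ▸ (hf b hb').2)
end

section
/- Among all trees with k peripheral vertices and order n ≥ 3k+1, the minimum of Norm(T) is k + 2k + 3(n−3k) = 3n − 6k, achieved by the tree S̃_{n,k} obtained from identifying one endpoint each of k paths of length 3 at a common vertex and attaching n−3k−1 pendant vertices to one of the vertices at distance 2 from the leaves. -/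
open Finset

variable {V : Type*}

/-!
Peripheral vertices of a tree are leaves, and more generally a vertex `w` at distance at most one
from the periphery has at most one non-peripheral neighbour: in a tree every neighbour of `w`
except the one on the way to a vertex farthest from `w` has strictly larger eccentricity. Hence
stepping towards a nearest peripheral vertex maps the vertices of norm `j + 1` injectively into
those of norm `j`, for `j = 0, 1`. With `aⱼ` vertices of norm `j` and `a₀ = k` this gives
`Norm(T) ≥ a₁ + 2 a₂ + 3 (n - a₀ - a₁ - a₂) ≥ 3n - 6k`.

For the spider `S̃_{n,k}` the diameter is `6`, the periphery consists of the `k` leg ends, and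
walking along a leg bounds the norms by `0, 1, 2` on each leg and by `3` elsewhere, whose sum is
`3n - 6k`.
-/

lemma three_mul_card_le_sum_add {α : Type*} [Fintype α] (f : α → ℕ) :
    3 * Fintype.card α ≤
      ∑ a, f a + 3 * #{a | f a = 0} + 2 * #{a | f a = 1} + #{a | f a = 2} := by
  calc 3 * Fintype.card α = ∑ _a : α, 3 := by simp [mul_comm]
    _ ≤ ∑ a, (f a + 3 * (if f a = 0 then 1 else 0) + 2 * (if f a = 1 then 1 else 0)
          + if f a = 2 then 1 else 0) := sum_le_sum fun a _ => by split_ifs <;> omega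
    _ = _ := by simp only [sum_add_distrib, ← mul_sum, card_filter]

namespace SimpleGraph

variable {G : SimpleGraph V} {u v w y₁ y₂ z : V}

lemma IsTree.dist_eq_length_of_isPath (hT : G.IsTree) {p : G.Walk u v} (hp : p.IsPath) :
    G.dist u v = p.length := by
  obtain ⟨q, hq, hql⟩ := hT.connected.exists_path_of_dist u v
  rw [← hql, (hT.existsUnique_path u v).unique hq hp]

lemma IsTree.eq_of_adj_of_dist_add_one_eq (hT : G.IsTree) (h₁ : G.Adj y₁ w) (h₂ : G.Adj y₂ w)
    (d₁ : G.dist z y₁ + 1 = G.dist z w) (d₂ : G.dist z y₂ + 1 = G.dist z w) : y₁ = y₂ := by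
  have geodesic {y : V} (h : G.Adj y w) (d : G.dist z y + 1 = G.dist z w) :
      ∃ p : G.Walk z w, p.IsPath ∧ p.penultimate = y := by
    obtain ⟨q, hq⟩ := hT.connected.exists_walk_length_eq_dist z y
    exact ⟨q.concat h, (q.concat h).isPath_of_length_eq_dist (by simp [hq, d]),
      q.penultimate_concat h⟩
  obtain ⟨p₁, hp₁, rfl⟩ := geodesic h₁ d₁
  obtain ⟨p₂, hp₂, rfl⟩ := geodesic h₂ d₂
  rw [(hT.existsUnique_path z w).unique hp₁ hp₂]

section Fintype

variable [Fintype V]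

lemma dist_le_ecc (v u : V) : G.dist v u ≤ ecc G v := le_sup (mem_univ u)

lemma ecc_le_gdiam (v : V) : ecc G v ≤ gdiam G := le_sup (mem_univ v)

lemma exists_dist_eq_ecc [Nonempty V] (v : V) : ∃ u, G.dist v u = ecc G v := by
  obtain ⟨u, -, hu⟩ := exists_mem_eq_sup univ univ_nonempty (G.dist v)
  exact ⟨u, hu.symm⟩

lemma exists_peripheral [Nonempty V] : ∃ u, peripheral G u := by
  obtain ⟨u, -, hu⟩ := exists_mem_eq_sup univ univ_nonempty (ecc G)
  exact ⟨u, hu.symm⟩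

lemma gnorm_le_dist (hu : peripheral G u) (v : V) : gnorm G v ≤ G.dist v u :=
  Nat.sInf_le ⟨u, hu, rfl⟩

lemma exists_peripheral_dist_eq_gnorm [Nonempty V] (v : V) :
    ∃ u, peripheral G u ∧ G.dist v u = gnorm G v := by
  obtain ⟨u, hu⟩ := G.exists_peripheral
  exact Nat.sInf_mem (s := {n | ∃ u, peripheral G u ∧ G.dist v u = n}) ⟨_, u, hu, rfl⟩

lemma ecc_le_ecc_add_dist (hc : G.Connected) (v w : V) : ecc G v ≤ ecc G w + G.dist v w :=
  Finset.sup_le fun u _ => by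
    have := dist_le_ecc (G := G) w u
    have := hc.dist_triangle (u := v) (v := w) (w := u)
    omega

lemma gnorm_le_gnorm_add_dist (hc : G.Connected) (v w : V) :
    gnorm G v ≤ gnorm G w + G.dist v w := by
  have := hc.nonempty
  obtain ⟨u, hu, hwu⟩ := G.exists_peripheral_dist_eq_gnorm w
  have := gnorm_le_dist hu v
  have := hc.dist_triangle (u := v) (v := w) (w := u)
  omega

lemma gnorm_eq_zero_iff (hc : G.Connected) : gnorm G v = 0 ↔ peripheral G v := by
  have := hc.nonempty
  refine ⟨fun h => ?_, fun h => by simpa using gnorm_le_dist h v⟩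
  obtain ⟨u, hu, hvu⟩ := G.exists_peripheral_dist_eq_gnorm v
  rw [h] at hvu
  rwa [hc.dist_eq_zero_iff.mp hvu]

lemma gdiam_le_ecc_add_gnorm (hc : G.Connected) (v : V) : gdiam G ≤ ecc G v + gnorm G v := by
  have := hc.nonempty
  obtain ⟨u, hu, hvu⟩ := G.exists_peripheral_dist_eq_gnorm v
  rw [← hu, ← hvu, dist_comm]
  exact ecc_le_ecc_add_dist hc u v

lemma exists_adj_gnorm_eq (hc : G.Connected) {j : ℕ} (hv : gnorm G v = j + 1) :
    ∃ w, G.Adj v w ∧ gnorm G w = j := by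
  have := hc.nonempty
  obtain ⟨u, hu, hvu⟩ := G.exists_peripheral_dist_eq_gnorm v
  obtain ⟨p, hp⟩ := hc.exists_walk_length_eq_dist v u
  cases p with
  | nil => simp_all
  | @cons _ w _ hvw q =>
    refine ⟨w, hvw, le_antisymm ?_ ?_⟩
    · have := gnorm_le_dist hu w
      have := dist_le q
      simp only [Walk.length_cons] at hp
      omega
    · have := gnorm_le_gnorm_add_dist hc v w
      rw [dist_eq_one_iff_adj.mpr hvw] at this
      omega

lemma IsTree.eq_of_adj_of_ecc_le (hT : G.IsTree) (h₁ : G.Adj w y₁) (h₂ : G.Adj w y₂)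
    (e₁ : ecc G y₁ ≤ ecc G w) (e₂ : ecc G y₂ ≤ ecc G w) : y₁ = y₂ := by
  have := hT.connected.nonempty
  obtain ⟨z, hz⟩ := G.exists_dist_eq_ecc w
  have closer {y : V} (h : G.Adj y w) (e : ecc G y ≤ ecc G w) :
      G.dist z y + 1 = G.dist z w := by
    have := dist_le_ecc (G := G) y z
    rw [dist_comm] at this hz
    rcases hT.dist_eq_dist_add_one_of_adj z h with h' | h' <;> omega
  exact hT.eq_of_adj_of_dist_add_one_eq h₁.symm h₂.symm (closer h₁.symm e₁) (closer h₂.symm e₂)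

lemma IsTree.eq_of_adj_of_gnorm_le_one (hT : G.IsTree) (hw : gnorm G w ≤ 1)
    (h₁ : G.Adj w y₁) (h₂ : G.Adj w y₂) (hy₁ : ¬ peripheral G y₁) (hy₂ : ¬ peripheral G y₂) :
    y₁ = y₂ := by
  have := gdiam_le_ecc_add_gnorm hT.connected w
  have := ecc_le_gdiam (G := G) y₁
  have := ecc_le_gdiam (G := G) y₂
  unfold peripheral at hy₁ hy₂
  exact hT.eq_of_adj_of_ecc_le h₁ h₂ (by omega) (by omega)

lemma IsTree.card_gnorm_eq_succ_le (hT : G.IsTree) {j : ℕ} (hj : j ≤ 1) :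
    #{v | gnorm G v = j + 1} ≤ #{v | gnorm G v = j} := by
  have hc := hT.connected
  have step (v : V) : ∃ w, gnorm G v = j + 1 → G.Adj v w ∧ gnorm G w = j := by
    by_cases hv : gnorm G v = j + 1
    · obtain ⟨w, hw⟩ := exists_adj_gnorm_eq hc hv
      exact ⟨w, fun _ => hw⟩
    · exact ⟨v, fun h => absurd h hv⟩
  choose f hf using step
  have nonperipheral {v : V} (hv : gnorm G v = j + 1) : ¬ peripheral G v :=
    (gnorm_eq_zero_iff hc).not.mp (by omega)
  refine card_le_card_of_injOn f (fun v hv => ?_) fun v₁ hv₁ v₂ hv₂ he => ?_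
  · simp only [mem_coe, mem_filter, mem_univ, true_and] at hv ⊢
    exact (hf v hv).2
  · simp only [mem_coe, mem_filter, mem_univ, true_and] at hv₁ hv₂
    obtain ⟨a₁, g⟩ := hf v₁ hv₁
    obtain ⟨a₂, -⟩ := hf v₂ hv₂
    rw [he] at a₁ g
    exact hT.eq_of_adj_of_gnorm_le_one (by omega) a₁.symm a₂.symm
      (nonperipheral hv₁) (nonperipheral hv₂)

lemma IsTree.three_mul_card_sub_six_mul_le_normSum (hT : G.IsTree) :
    3 * Fintype.card V - 6 * {v | peripheral G v}.ncard ≤ NormSum G := by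
  have h₀ : #{v | gnorm G v = 0} = {v | peripheral G v}.ncard := by
    rw [← Set.ncard_coe_finset]
    congr 1
    ext v
    simp [gnorm_eq_zero_iff hT.connected]
  have h₁ : #{v | gnorm G v = 1} ≤ #{v | gnorm G v = 0} :=
    hT.card_gnorm_eq_succ_le zero_le_one
  have h₂ : #{v | gnorm G v = 2} ≤ #{v | gnorm G v = 1} := hT.card_gnorm_eq_succ_le le_rfl
  have := three_mul_card_le_sum_add (gnorm G)
  unfold NormSum
  omega

end Fintype

def parentGraph (π : V → V) : SimpleGraph V := fromRel fun u v => π u = v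

section parentGraph

variable {π : V → V} {h : V → ℕ} {r : V}

lemma parentGraph_adj : (parentGraph π).Adj u v ↔ u ≠ v ∧ (π u = v ∨ π v = u) := fromRel_adj ..

lemma parentGraph_adj_parent (hπ : ∀ v, v ≠ r → h (π v) + 1 = h v) (hv : v ≠ r) :
    (parentGraph π).Adj v (π v) :=
  parentGraph_adj.mpr ⟨fun he => by have := hπ v hv; rw [← he] at this; omega, .inl rfl⟩

lemma exists_parentGraph_walk_length_le (hπ : ∀ v, v ≠ r → h (π v) + 1 = h v) (v : V) :
    ∃ p : (parentGraph π).Walk v r, p.length ≤ h v := by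
  induction hv : h v generalizing v with
  | zero =>
    by_cases hvr : v = r
    · exact hvr ▸ ⟨.nil, le_rfl⟩
    · have := hπ v hvr; omega
  | succ m ih =>
    by_cases hvr : v = r
    · exact hvr ▸ ⟨.nil, by simp⟩
    · obtain ⟨p, hp⟩ := ih (π v) (by have := hπ v hvr; omega)
      exact ⟨.cons (parentGraph_adj_parent hπ hvr) p, by rw [Walk.length_cons]; omega⟩

lemma parentGraph_dist_le (hπ : ∀ v, v ≠ r → h (π v) + 1 = h v) (v : V) :
    (parentGraph π).dist v r ≤ h v := by
  obtain ⟨p, hp⟩ := exists_parentGraph_walk_length_le hπ v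
  exact (dist_le p).trans hp

lemma isTree_parentGraph [Finite V] (hr : π r = r) (hπ : ∀ v, v ≠ r → h (π v) + 1 = h v) :
    (parentGraph π).IsTree := by
  have reach (v : V) : (parentGraph π).Reachable v r :=
    (exists_parentGraph_walk_length_le hπ v).elim fun p _ => ⟨p⟩
  rw [isTree_iff_connected_and_card]
  refine ⟨(connected_iff _).mpr ⟨fun u v => (reach u).trans (reach v).symm, ⟨r⟩⟩, ?_⟩
  let e : ({r}ᶜ : Set V) → (parentGraph π).edgeSet := fun v =>
    ⟨s(v, π v), parentGraph_adj_parent hπ v.2⟩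
  have he : e.Bijective := by
    refine ⟨fun a b hab => ?_, fun ⟨x, hx⟩ => ?_⟩
    · rcases Sym2.eq_iff.mp (congrArg Subtype.val hab) with ⟨hab, -⟩ | ⟨hab, hba⟩
      · exact Subtype.ext hab
      · have ha := hπ a a.2
        have hb := hπ b b.2
        rw [hba] at ha
        rw [← hab] at hb
        omega
    · induction x using Sym2.ind with
      | _ a b =>
      rcases parentGraph_adj.mp (show (parentGraph π).Adj a b from hx) with ⟨hne, rfl | rfl⟩
      · exact ⟨⟨a, fun (har : a = r) => hne (by rw [har, hr])⟩, rfl⟩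
      · exact ⟨⟨b, fun (hbr : b = r) => hne (by rw [hbr, hr])⟩, Subtype.ext Sym2.eq_swap⟩
  rw [← Nat.card_congr (Equiv.ofBijective e he), Nat.card_coe_set_eq, add_comm,
    ← Set.ncard_singleton r, Set.ncard_add_ncard_compl]

end parentGraph

end SimpleGraph

/- The spider `S̃_{n,k}` on `{0, …, n - 1}`: `0` is the centre, leg `i < k` is the path
`0 — 3i+1 — 3i+2 — 3i+3`, and every `m > 3k` is a pendant vertex at `1`. -/
def spiderParent (k m : ℕ) : ℕ := if 3 * k < m then 1 else if m % 3 = 1 then 0 else m - 1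

def spiderHeight (k m : ℕ) : ℕ := if m = 0 then 0 else if 3 * k < m then 2 else (m - 1) % 3 + 1

def spiderNormBound (k m : ℕ) : ℕ := if m = 0 ∨ 3 * k < m then 3 else 3 - spiderHeight k m

lemma spiderParent_le (k m : ℕ) : spiderParent k m ≤ m := by
  unfold spiderParent; split_ifs <;> omega

lemma spiderParent_of_lt {k m : ℕ} (h : 3 * k < m) : spiderParent k m = 1 := if_pos h

lemma spiderParent_of_mod_eq_one {k m : ℕ} (h : m ≤ 3 * k) (h' : m % 3 = 1) :
    spiderParent k m = 0 := by
  rw [spiderParent, if_neg h.not_gt, if_pos h']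

lemma spiderParent_of_mod_ne_one {k m : ℕ} (h : m ≤ 3 * k) (h' : m % 3 ≠ 1) :
    spiderParent k m = m - 1 := by
  rw [spiderParent, if_neg h.not_gt, if_neg h']

lemma spiderHeight_spiderParent {k m : ℕ} (hk : 1 ≤ k) (hm : m ≠ 0) :
    spiderHeight k (spiderParent k m) + 1 = spiderHeight k m := by
  unfold spiderHeight spiderParent; grind

lemma spiderHeight_le (k m : ℕ) : spiderHeight k m ≤ 3 := by
  unfold spiderHeight; split_ifs <;> omega

lemma spiderHeight_of_mem_Ioc {k m : ℕ} (h : m ∈ Ioc 0 (3 * k)) :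
    spiderHeight k m = (m - 1) % 3 + 1 := by
  rw [mem_Ioc] at h; unfold spiderHeight; grind

lemma spiderHeight_eq_three_iff {k m : ℕ} :
    spiderHeight k m = 3 ↔ m ∈ Ioc 0 (3 * k) ∧ 3 ∣ m := by
  rw [mem_Ioc]; unfold spiderHeight; grind

lemma sum_range_spiderNormBound {k n : ℕ} (hn : 3 * k + 1 ≤ n) :
    ∑ m ∈ range n, spiderNormBound k m = 3 * n - 6 * k := by
  have legs (j : ℕ) (hj : j ≤ k) :
      ∑ m ∈ range (3 * j + 1), spiderNormBound k m = 3 * j + 3 := by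
    induction j with
    | zero => simp [spiderNormBound]
    | succ j ih =>
      rw [show 3 * (j + 1) + 1 = 3 * j + 1 + 1 + 1 + 1 by ring, sum_range_succ, sum_range_succ,
        sum_range_succ, ih (by omega)]
      simp only [spiderNormBound, spiderHeight]
      grind
  induction n, hn using Nat.le_induction with
  | base => rw [legs k le_rfl]; omega
  | succ n hn ih =>
    rw [sum_range_succ, ih, spiderNormBound, if_pos (.inr (by omega))]
    omega

namespace SimpleGraph

def spiderParentFin (k n : ℕ) (v : Fin n) : Fin n :=
  ⟨spiderParent k v, (spiderParent_le k v).trans_lt v.2⟩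

def spider (k n : ℕ) : SimpleGraph (Fin n) := parentGraph (spiderParentFin k n)

section spider

variable {k n : ℕ} {u v : Fin n}

lemma spider_adj_of_spiderParent (h : spiderParent k u = v) (hne : (u : ℕ) ≠ v) :
    (spider k n).Adj u v :=
  parentGraph_adj.mpr ⟨fun he => hne (congrArg Fin.val he), .inl (Fin.ext h)⟩

lemma spiderHeight_spiderParentFin (hk : 1 ≤ k) (hn : 0 < n) :
    ∀ w, w ≠ (⟨0, hn⟩ : Fin n) → spiderHeight k (spiderParentFin k n w) + 1 = spiderHeight k w :=
  fun _ hw => spiderHeight_spiderParent hk fun h => hw (Fin.ext h)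

lemma spider_isTree (hk : 1 ≤ k) (hn : 0 < n) : (spider k n).IsTree :=
  isTree_parentGraph (h := fun v : Fin n => spiderHeight k v)
    (Fin.ext (by simp [spiderParentFin, spiderParent])) (spiderHeight_spiderParentFin hk hn)

lemma spider_dist_root_le (hk : 1 ≤ k) (hn : 0 < n) (v : Fin n) :
    (spider k n).dist v ⟨0, hn⟩ ≤ spiderHeight k v :=
  parentGraph_dist_le (h := fun v : Fin n => spiderHeight k v)
    (spiderHeight_spiderParentFin hk hn) v

lemma spider_ecc_le (hk : 1 ≤ k) (hn : 0 < n) (v : Fin n) :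
    ecc (spider k n) v ≤ spiderHeight k v + 3 := by
  refine Finset.sup_le fun u _ => ?_
  have := (spider_isTree hk hn).connected.dist_triangle (u := v) (v := ⟨0, hn⟩) (w := u)
  have := spider_dist_root_le hk hn v
  have hu := spider_dist_root_le hk hn u
  have := spiderHeight_le k u
  rw [dist_comm] at hu
  omega

lemma spider_six_le_dist (hk : 1 ≤ k) (hn : 0 < n) (hu : spiderHeight k u = 3)
    (hv : spiderHeight k v = 3) (huv : u ≠ v) : 6 ≤ (spider k n).dist u v := by
  rw [spiderHeight_eq_three_iff, mem_Ioc] at hu hv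
  have hne : (u : ℕ) ≠ v := Fin.val_ne_iff.mpr huv
  have below (w : Fin n) (m : ℕ) (hm : m ≤ w) : ∃ a : Fin n, (a : ℕ) = m :=
    ⟨⟨m, hm.trans_lt w.2⟩, rfl⟩
  obtain ⟨a₁, ha₁⟩ := below u (u - 1) (by omega)
  obtain ⟨a₂, ha₂⟩ := below u (u - 2) (by omega)
  obtain ⟨b₁, hb₁⟩ := below v (v - 1) (by omega)
  obtain ⟨b₂, hb₂⟩ := below v (v - 2) (by omega)
  obtain ⟨o, ho⟩ := below u 0 (by omega)
  have up {a b : Fin n} (ha : (a : ℕ) ≤ 3 * k) (hmod : (a : ℕ) % 3 ≠ 1) (hb : (b : ℕ) + 1 = a) :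
      (spider k n).Adj a b :=
    spider_adj_of_spiderParent (by rw [spiderParent_of_mod_ne_one ha hmod]; omega) (by omega)
  have root {a : Fin n} (ha : (a : ℕ) ≤ 3 * k) (hmod : (a : ℕ) % 3 = 1) : (spider k n).Adj a o :=
    spider_adj_of_spiderParent (by rw [spiderParent_of_mod_eq_one ha hmod, ho]) (by omega)
  let p : (spider k n).Walk u v :=
    .cons (up (a := u) (b := a₁) (by omega) (by omega) (by omega)) <|
    .cons (up (a := a₁) (b := a₂) (by omega) (by omega) (by omega)) <|
    .cons (root (a := a₂) (by omega) (by omega)) <|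
    .cons (root (a := b₂) (by omega) (by omega)).symm <|
    .cons (up (a := b₁) (b := b₂) (by omega) (by omega) (by omega)).symm <|
    .cons (up (a := v) (b := b₁) (by omega) (by omega) (by omega)).symm .nil
  have hp : p.IsPath := by
    simp only [Walk.isPath_def, Walk.support_cons, Walk.support_nil, List.nodup_cons,
      List.mem_cons, List.not_mem_nil, or_false, not_or, not_false_eq_true, List.nodup_nil,
      and_self, and_true, p, Fin.ext_iff]
    omega
  exact ((spider_isTree hk hn).dist_eq_length_of_isPath hp).ge

lemma spider_six_le_ecc (hk : 2 ≤ k) (hn : 3 * k + 1 ≤ n) (hv : spiderHeight k v = 3) :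
    6 ≤ ecc (spider k n) v := by
  have hv' := spiderHeight_eq_three_iff.mp hv
  rw [mem_Ioc] at hv'
  obtain ⟨u, hu⟩ : ∃ u : Fin n, (u : ℕ) = if (v : ℕ) = 3 then 6 else 3 :=
    ⟨⟨if (v : ℕ) = 3 then 6 else 3, by split_ifs <;> omega⟩, rfl⟩
  have hu3 : spiderHeight k u = 3 := by
    rw [spiderHeight_eq_three_iff, hu, mem_Ioc]
    split_ifs <;> omega
  have huv : u ≠ v := fun h => by
    subst h
    split_ifs at hu <;> omega
  exact (spider_six_le_dist (by omega) (by omega) hu3 hv huv).trans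
    (dist_comm ▸ dist_le_ecc v u)

lemma spider_peripheral_iff (hk : 2 ≤ k) (hn : 3 * k + 1 ≤ n) :
    peripheral (spider k n) v ↔ spiderHeight k v = 3 := by
  have hleaf : spiderHeight k (3 : ℕ) = 3 := spiderHeight_eq_three_iff.mpr (by rw [mem_Ioc]; omega)
  have hdiam : gdiam (spider k n) = 6 := by
    refine le_antisymm (Finset.sup_le fun w _ => ?_) ?_
    · have := spider_ecc_le (k := k) (by omega) (by omega) w
      have := spiderHeight_le k w
      omega
    · exact (spider_six_le_ecc hk hn (v := ⟨3, by omega⟩) hleaf).trans (ecc_le_gdiam _)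
  have := spider_ecc_le (k := k) (by omega) (by omega) v
  have := spiderHeight_le k v
  unfold peripheral
  rw [hdiam]
  refine ⟨fun h => by omega, fun h => ?_⟩
  have := spider_six_le_ecc hk hn h
  omega

lemma spider_ncard_peripheral (hk : 2 ≤ k) (hn : 3 * k + 1 ≤ n) :
    {v | peripheral (spider k n) v}.ncard = k := by
  have himage : Fin.val '' {v | peripheral (spider k n) v} = ↑{m ∈ Ioc 0 (3 * k) | 3 ∣ m} := by
    ext m
    simp only [spider_peripheral_iff hk hn, spiderHeight_eq_three_iff, Set.mem_image,
      Set.mem_ofPred_eq, coe_filter, mem_Ioc]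
    exact ⟨fun ⟨v, hv, hvm⟩ => hvm ▸ hv, fun hm => ⟨⟨m, by omega⟩, hm, rfl⟩⟩
  rw [← Set.ncard_image_of_injective _ Fin.val_injective, himage, Set.ncard_coe_finset,
    Nat.Ioc_filter_dvd_card_eq_div]
  omega

lemma spider_gnorm_add_spiderHeight_le (hk : 2 ≤ k) (hn : 3 * k + 1 ≤ n)
    (hv : (v : ℕ) ∈ Ioc 0 (3 * k)) : gnorm (spider k n) v + spiderHeight k v ≤ 3 := by
  have hc := (spider_isTree (k := k) (n := n) (by omega) (by omega)).connected
  suffices key : ∀ d (v : Fin n), (v : ℕ) ∈ Ioc 0 (3 * k) → spiderHeight k v + d = 3 →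
      gnorm (spider k n) v ≤ d by
    have := spiderHeight_le k v
    have := key (3 - spiderHeight k v) v hv (by omega)
    omega
  intro d
  induction d with
  | zero =>
    intro v _ hv
    exact ((gnorm_eq_zero_iff hc).mpr ((spider_peripheral_iff hk hn).mpr hv)).le
  | succ d ih =>
    intro v hv hd
    rw [spiderHeight_of_mem_Ioc hv] at hd
    rw [mem_Ioc] at hv
    obtain ⟨w, hw⟩ : ∃ w : Fin n, (w : ℕ) = v + 1 := ⟨⟨v + 1, by omega⟩, rfl⟩
    have hw' : (w : ℕ) ∈ Ioc 0 (3 * k) := by rw [mem_Ioc]; omega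
    have hvw : (spider k n).Adj v w := (spider_adj_of_spiderParent
      (by rw [spiderParent_of_mod_ne_one (by omega) (by omega)]; omega) (by omega)).symm
    have := gnorm_le_gnorm_add_dist hc v w
    rw [dist_eq_one_iff_adj.mpr hvw] at this
    have := ih w hw' (by rw [spiderHeight_of_mem_Ioc hw']; omega)
    omega

lemma spider_gnorm_le (hk : 2 ≤ k) (hn : 3 * k + 1 ≤ n) (v : Fin n) :
    gnorm (spider k n) v ≤ spiderNormBound k v := by
  by_cases hv : (v : ℕ) ∈ Ioc 0 (3 * k)
  · have := spider_gnorm_add_spiderHeight_le hk hn hv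
    rw [mem_Ioc] at hv
    rw [spiderNormBound, if_neg (by omega)]
    omega
  rw [mem_Ioc] at hv
  rw [spiderNormBound, if_pos (by omega)]
  obtain ⟨a, ha⟩ : ∃ a : Fin n, (a : ℕ) = 1 := ⟨⟨1, by omega⟩, rfl⟩
  have ha' : (a : ℕ) ∈ Ioc 0 (3 * k) := by rw [mem_Ioc]; omega
  have hva : (spider k n).Adj v a := by
    rcases Nat.eq_zero_or_pos v with h0 | hpos
    · exact (spider_adj_of_spiderParent
        (by rw [spiderParent_of_mod_eq_one (by omega) (by omega)]; exact h0.symm) (by omega)).symm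
    · exact spider_adj_of_spiderParent (by rw [spiderParent_of_lt (by omega)]; omega) (by omega)
  have := spider_gnorm_add_spiderHeight_le hk hn ha'
  rw [spiderHeight_of_mem_Ioc ha', ha] at this
  have := gnorm_le_gnorm_add_dist (spider_isTree (k := k) (by omega) (by omega)).connected v a
  rw [dist_eq_one_iff_adj.mpr hva] at this
  omega

lemma spider_normSum_le (hk : 2 ≤ k) (hn : 3 * k + 1 ≤ n) :
    NormSum (spider k n) ≤ 3 * n - 6 * k :=
  calc NormSum (spider k n) ≤ ∑ v : Fin n, spiderNormBound k v :=
        sum_le_sum fun v _ => spider_gnorm_le hk hn v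
    _ = 3 * n - 6 * k := by
        rw [Fin.sum_univ_eq_sum_range (spiderNormBound k), sum_range_spiderNormBound hn]

end spider

end SimpleGraph

theorem stmt_19 (n k : ℕ) (hk : 2 ≤ k) (hn : 3 * k + 1 ≤ n) :
    (∀ (W : Type) [Fintype W] (G : SimpleGraph W), G.IsTree →
      Fintype.card W = n → {v : W | peripheral G v}.ncard = k →
      3 * n - 6 * k ≤ NormSum G) ∧
    (∃ G : SimpleGraph (Fin n), G.IsTree ∧
      {v : Fin n | peripheral G v}.ncard = k ∧ NormSum G = 3 * n - 6 * k) := by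
  have lower {W : Type} [Fintype W] {G : SimpleGraph W} (hT : G.IsTree)
      (hcard : Fintype.card W = n) (hP : {v : W | peripheral G v}.ncard = k) :
      3 * n - 6 * k ≤ NormSum G :=
    hcard ▸ hP ▸ hT.three_mul_card_sub_six_mul_le_normSum
  have hT : (SimpleGraph.spider k n).IsTree := SimpleGraph.spider_isTree (by omega) (by omega)
  have hP := SimpleGraph.spider_ncard_peripheral hk hn
  exact ⟨fun _ _ _ hT hcard hP => lower hT hcard hP, SimpleGraph.spider k n, hT, hP,
    le_antisymm (SimpleGraph.spider_normSum_le hk hn) (lower hT (Fintype.card_fin n) hP)⟩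
end
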